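/- arXiv:2504.20875 — 2 statements merged into one kernel-verified Lean document; each statement's English description precedes it below -/
import Mathlib

section
/- For integers a, b, k with k ≥ b > a ≥ 1, the generating function for partitions in D_{a,b,k} satisfies Σ_{π ∈ D_{a,b,k}} u^{ℓ_a(π)} v^{ℓ_b(π)} q^{|π|} = Σ_{m ≥ 0} u^m q^{k·C(m,2)+ma} / (q^k; q^k)_m · (−u^{−1} v q^{b−a}; q^k)_m = Σ_{h ≥ 0} v^h q^{2k·C(h,2)+bh} / (q^k; q^k)_h · (−u q^{kh+a}; q^k)_∞. -/
/-- The finite q-Pochhammer symbol `(t;q)_n = ∏_{i=0}^{n-1} (1 - t qⁱ)`. -/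
noncomputable def qPoch (t q : ℂ) (n : ℕ) : ℂ := ∏ i ∈ Finset.range n, (1 - t * q ^ i)

/-- The infinite q-Pochhammer symbol `(t;q)_∞ = ∏_{i≥0} (1 - t qⁱ)`. -/
noncomputable def qPochInf (t q : ℂ) : ℂ := ∏' i : ℕ, (1 - t * q ^ i)

/-- The Gaussian binomial coefficient `[A choose B]` in base `q`:
`(q;q)_A / ((q;q)_B (q;q)_{A-B})` for `A ≥ B ≥ 0`, and `0` otherwise. -/
noncomputable def gbinom (q : ℂ) (A B : ℕ) : ℂ :=
  if B ≤ A then qPoch q q A / (qPoch q q B * qPoch q q (A - B)) else 0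

/-- `lcount k c l` is the number of parts of `l` congruent to `c` modulo `k`. -/
def lcount (k c : ℕ) (l : List ℕ) : ℕ := (l.filter (fun x => x % k = c % k)).length

/-- Membership in `D_{a,b,k}`: a partition all of whose parts are `≡ a` or `b (mod k)` and
whose consecutive parts differ by at least `k`, with strict inequality whenever the larger
part is `≡ b (mod k)`. -/
def memD (a b k : ℕ) (l : List ℕ) : Prop :=
  l.Pairwise (· ≥ ·) ∧ (∀ x ∈ l, 0 < x ∧ (x % k = a % k ∨ x % k = b % k)) ∧
    l.Chain' (fun x y => y + k ≤ x ∧ (x % k = b % k → y + k < x))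

/-!
Write a partition in `D_{a,b,k}` from the top as parts `a + (b - a) ε_j + k c_j` with colours
`ε_j ∈ {0, 1}` and levels `c_j`. The difference conditions say exactly that
`c_j ≥ c_{j+1} + 1 + ε_{j+1}`, so recording the excess `f_j ≥ 0` in each of these inequalities
(and the lowest level itself) is a bijection with arbitrary finite sequences of pairs
`(ε_j, f_j)`. Under it the weight `u^{ℓ_a} v^{ℓ_b} q^{|π|}` factors over the positions `j`, and
summing the geometric series in each `f_j` gives the first identity.

For the second, expand `∏_j (u + v q^{b-a} q^{kj})` by the finite q-binomial theorem, resum the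
resulting absolutely convergent double series along the other diagonal, and recognise the inner
sums through Euler's identity `(-t; Q)_∞ = Σ_s t^s Q^{C(s,2)} / (Q; Q)_s`, which is the limit of
the q-binomial theorem by dominated convergence.
-/

open Finset Filter Topology

theorem add_choose_two (h s : ℕ) : (h + s).choose 2 = h.choose 2 + s.choose 2 + h * s := by
  simp [Nat.add_choose_eq, Finset.Nat.antidiagonal_succ]; ring

theorem summable_pow_mul_pow_choose {C r : ℝ} (hC : 0 ≤ C) (hr0 : 0 ≤ r) (hr : r < 1) :
    Summable fun m : ℕ => C ^ m * r ^ m.choose 2 := by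
  refine summable_of_ratio_norm_eventually_le (r := 1 / 2) (by norm_num) ?_
  have hlim : Tendsto (fun m : ℕ => C * r ^ m) atTop (𝓝 0) := by
    simpa using (tendsto_pow_atTop_nhds_zero_of_lt_one hr0 hr).const_mul C
  filter_upwards [hlim.eventually_lt_const (by norm_num : (0 : ℝ) < 1 / 2)] with m hm
  rw [Real.norm_of_nonneg (by positivity), Real.norm_of_nonneg (by positivity),
    Nat.choose_succ_succ', Nat.choose_one_right, pow_succ, pow_add]
  calc C ^ m * C * (r ^ m * r ^ m.choose 2) = (C * r ^ m) * (C ^ m * r ^ m.choose 2) := by ring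
    _ ≤ 1 / 2 * (C ^ m * r ^ m.choose 2) := by gcongr

theorem summable_prod_range_of_le {g : ℕ → ℝ} {C r : ℝ} (hg0 : ∀ j, 0 ≤ g j)
    (hg : ∀ j, g j ≤ C * r ^ j) (hC : 0 ≤ C) (hr0 : 0 ≤ r) (hr : r < 1) :
    Summable fun m => ∏ j ∈ range m, g j := by
  refine .of_nonneg_of_le (fun m => prod_nonneg fun j _ => hg0 j) (fun m => ?_)
    (summable_pow_mul_pow_choose hC hr0 hr)
  calc ∏ j ∈ range m, g j ≤ ∏ j ∈ range m, C * r ^ j :=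
        prod_le_prod (fun j _ => hg0 j) fun j _ => hg j
    _ = C ^ m * r ^ m.choose 2 := by
        rw [prod_mul_distrib, prod_const, card_range, prod_pow_eq_pow_sum, sum_range_id,
          Nat.choose_two_right]

theorem tsum_prod_eq_tsum_sum_antidiagonal {α : Type*} [AddCommGroup α] [UniformSpace α]
    [IsUniformAddGroup α] [CompleteSpace α] [T0Space α] {f : ℕ × ℕ → α} (hf : Summable f) :
    ∑' p, f p = ∑' n, ∑ p ∈ antidiagonal n, f p := by
  rw [← HasAntidiagonal.sigmaAntidiagonalEquivProd.tsum_eq]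
  refine ((HasAntidiagonal.sigmaAntidiagonalEquivProd.summable_iff.mpr hf).tsum_sigma).trans ?_
  exact tsum_congr fun n => (tsum_fintype _).trans (Finset.sum_coe_sort _ _)

section ProductSums

variable {𝕜 β : Type*} [NormedField 𝕜]

theorem norm_pow_lt_one {x : 𝕜} (hx : ‖x‖ < 1) {n : ℕ} (hn : n ≠ 0) : ‖x ^ n‖ < 1 := by
  rw [norm_pow]; exact pow_lt_one₀ (norm_nonneg x) hx hn

theorem summable_norm_fin_pi_prod {m : ℕ} {f : Fin m → β → 𝕜}
    (hf : ∀ j, Summable fun x => ‖f j x‖) :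
    Summable fun g : Fin m → β => ‖∏ j, f j (g j)‖ := by
  induction m with
  | zero => exact .of_finite
  | succ n ih =>
    rw [← (Fin.consEquiv fun _ => β).summable_iff]
    simpa [Function.comp_def, Fin.prod_univ_succ] using
      (hf 0).mul_of_nonneg (ih fun j => hf j.succ) (fun _ => norm_nonneg _)
        (fun _ => norm_nonneg _)

theorem tsum_fin_pi_prod [CompleteSpace 𝕜] {m : ℕ} {f : Fin m → β → 𝕜}
    (hf : ∀ j, Summable fun x => ‖f j x‖) :
    ∑' g : Fin m → β, ∏ j, f j (g j) = ∏ j, ∑' x, f j x := by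
  induction m with
  | zero => simp
  | succ n ih =>
    rw [← (Fin.consEquiv fun _ => β).tsum_eq, Fin.prod_univ_succ, ← ih fun j => hf j.succ,
      tsum_mul_tsum_of_summable_norm (hf 0) (summable_norm_fin_pi_prod fun j => hf j.succ)]
    simp [Fin.prod_univ_succ]

theorem tsum_sigma_fin_prod [CompleteSpace 𝕜] {f : ℕ → β → 𝕜}
    (hf : ∀ j, Summable fun x => ‖f j x‖)
    (hs : Summable fun m => ∏ j ∈ range m, ∑' x, ‖f j x‖) :
    ∑' p : Σ m, (Fin m → β), ∏ j : Fin p.1, f j (p.2 j) = ∑' m, ∏ j ∈ range m, ∑' x, f j x := by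
  have hnorm (m : ℕ) :
      ∑' g : Fin m → β, ‖∏ j : Fin m, f j (g j)‖ = ∏ j ∈ range m, ∑' x, ‖f j x‖ := by
    simp_rw [norm_prod]
    rw [tsum_fin_pi_prod (f := fun (j : Fin m) x => ‖f j x‖) fun j => by simpa using hf j]
    exact Fin.prod_univ_eq_prod_range (fun j => ∑' x, ‖f j x‖) m
  have hsum : Summable fun p : Σ m, (Fin m → β) => ∏ j : Fin p.1, f j (p.2 j) :=
    .of_norm <| (summable_sigma_of_nonneg fun _ => norm_nonneg _).mpr
      ⟨fun m => summable_norm_fin_pi_prod (f := fun (j : Fin m) => f j) fun j => hf j,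
        hs.congr fun m => (hnorm m).symm⟩
  rw [hsum.tsum_sigma]
  exact tsum_congr fun m => (tsum_fin_pi_prod (f := fun (j : Fin m) => f j) fun j => hf j).trans
    (Fin.prod_univ_eq_prod_range (fun j => ∑' x, f j x) m)

theorem summable_norm_mul_pow {α : Type*} [Finite α] (A : α → 𝕜) {x : 𝕜} (hx : ‖x‖ < 1) :
    Summable fun p : α × ℕ => ‖A p.1 * x ^ p.2‖ :=
  Summable.mul_norm .of_finite (by simpa using summable_geometric_of_lt_one (norm_nonneg x) hx)

theorem tsum_mul_pow [CompleteSpace 𝕜] {α : Type*} [Fintype α] (A : α → 𝕜) {x : 𝕜}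
    (hx : ‖x‖ < 1) : ∑' p : α × ℕ, A p.1 * x ^ p.2 = (∑ a, A a) * (1 - x)⁻¹ := by
  rw [← tsum_mul_tsum_of_summable_norm .of_finite
    (by simpa using summable_geometric_of_lt_one (norm_nonneg x) hx), tsum_fintype,
    tsum_geometric_of_norm_lt_one hx]

end ProductSums

section QPochhammer

variable {t Q : ℂ}

@[simp] theorem qPoch_zero : qPoch t Q 0 = 1 := prod_range_zero _

theorem qPoch_succ (n : ℕ) : qPoch t Q (n + 1) = qPoch t Q n * (1 - t * Q ^ n) :=
  prod_range_succ _ _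

theorem qPoch_add (n s : ℕ) : qPoch t Q (n + s) = qPoch t Q n * qPoch (t * Q ^ n) Q s := by
  simp only [qPoch, prod_range_add, pow_add, mul_assoc]

theorem pow_le_norm_qPoch (ht : ‖t‖ < 1) (hQ : ‖Q‖ ≤ 1) (n : ℕ) :
    (1 - ‖t‖) ^ n ≤ ‖qPoch t Q n‖ := by
  rw [qPoch, norm_prod, show (1 - ‖t‖) ^ n = ∏ _i ∈ range n, (1 - ‖t‖) by simp]
  refine prod_le_prod (fun _ _ => by linarith) fun i _ => ?_
  calc 1 - ‖t‖ ≤ 1 - ‖t * Q ^ i‖ := by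
        gcongr
        rw [norm_mul, norm_pow]
        exact mul_le_of_le_one_right (norm_nonneg t) (pow_le_one₀ (norm_nonneg Q) hQ)
    _ ≤ ‖1 - t * Q ^ i‖ := by simpa using norm_sub_norm_le (1 : ℂ) (t * Q ^ i)

theorem norm_qPoch_le (hQ : ‖Q‖ ≤ 1) (n : ℕ) : ‖qPoch t Q n‖ ≤ (1 + ‖t‖) ^ n := by
  rw [qPoch, norm_prod, show (1 + ‖t‖) ^ n = ∏ _i ∈ range n, (1 + ‖t‖) by simp]
  refine prod_le_prod (fun _ _ => norm_nonneg _) fun i _ => (norm_sub_le _ _).trans ?_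
  rw [norm_one, norm_mul, norm_pow]
  gcongr
  exact mul_le_of_le_one_right (norm_nonneg t) (pow_le_one₀ (norm_nonneg Q) hQ)

theorem qPoch_ne_zero (ht : ‖t‖ < 1) (hQ : ‖Q‖ ≤ 1) (n : ℕ) : qPoch t Q n ≠ 0 :=
  norm_pos_iff.mp <| (pow_pos (by linarith) n).trans_le (pow_le_norm_qPoch ht hQ n)

theorem norm_inv_qPoch_le (ht : ‖t‖ < 1) (hQ : ‖Q‖ ≤ 1) (n : ℕ) :
    ‖(qPoch t Q n)⁻¹‖ ≤ (1 - ‖t‖)⁻¹ ^ n := by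
  rw [norm_inv, inv_pow]
  exact inv_anti₀ (pow_pos (by linarith) n) (pow_le_norm_qPoch ht hQ n)

end QPochhammer

section GaussianBinomial

variable {Q : ℂ}

theorem gbinom_add (h d : ℕ) :
    gbinom Q (h + d) h = qPoch Q Q (h + d) / (qPoch Q Q h * qPoch Q Q d) := by
  simp [gbinom]

theorem gbinom_of_lt {m h : ℕ} (hmh : m < h) : gbinom Q m h = 0 :=
  if_neg (Nat.not_le.mpr hmh)

theorem gbinom_self (hQ : ‖Q‖ < 1) (n : ℕ) : gbinom Q n n = 1 := by
  simpa [div_self (qPoch_ne_zero hQ hQ.le n)] using gbinom_add (Q := Q) n 0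

theorem gbinom_zero_right (hQ : ‖Q‖ < 1) (n : ℕ) : gbinom Q n 0 = 1 := by
  simpa [div_self (qPoch_ne_zero hQ hQ.le n)] using gbinom_add (Q := Q) 0 n

theorem gbinom_add_eq_qPoch_div (hQ : ‖Q‖ < 1) (n s : ℕ) :
    gbinom Q (n + s) s = qPoch (Q ^ (n + 1)) Q s / qPoch Q Q s := by
  rw [add_comm n, gbinom_add, add_comm s, qPoch_add, ← pow_succ']
  have := qPoch_ne_zero hQ hQ.le n
  field_simp

theorem gbinom_succ_succ (hQ : ‖Q‖ < 1) (m h : ℕ) :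
    gbinom Q (m + 1) (h + 1) = gbinom Q m h + Q ^ (h + 1) * gbinom Q m (h + 1) := by
  rcases lt_or_ge m h with hmh | hhm
  · simp [gbinom_of_lt hmh, gbinom_of_lt (Nat.succ_lt_succ hmh),
      gbinom_of_lt (hmh.trans h.lt_succ_self)]
  obtain ⟨d, rfl⟩ := Nat.exists_eq_add_of_le hhm
  rcases d with _ | d
  · simp [gbinom_self hQ, gbinom_of_lt (Nat.lt_succ_self h)]
  have hne (n : ℕ) : qPoch Q Q n ≠ 0 := qPoch_ne_zero hQ hQ.le n
  have hfac (n : ℕ) : 1 - Q * Q ^ n ≠ 0 := by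
    have := hne (n + 1)
    rw [qPoch_succ] at this
    exact right_ne_zero_of_mul this
  rw [show h + (d + 1) + 1 = (h + 1) + (d + 1) by ring, gbinom_add, gbinom_add,
    show h + (d + 1) = (h + 1) + d by ring, gbinom_add]
  simp only [show h + 1 + (d + 1) = h + d + 1 + 1 by ring, show h + 1 + d = h + d + 1 by ring,
    qPoch_succ]
  have := hne h
  have := hne d
  have := hne (h + d + 1)
  have := hfac h
  have := hfac d
  field_simp
  ring

theorem prod_add_mul_pow_eq_sum_gbinom (hQ : ‖Q‖ < 1) (m : ℕ) (x y : ℂ) :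
    ∏ i ∈ range m, (x + y * Q ^ i) =
      ∑ h ∈ range (m + 1), Q ^ h.choose 2 * gbinom Q m h * x ^ (m - h) * y ^ h := by
  induction m generalizing y with
  | zero => simp [gbinom_self hQ]
  | succ m ih =>
    have hx : x * ∑ h ∈ range (m + 1), Q ^ h.choose 2 * gbinom Q m h * x ^ (m - h) * (y * Q) ^ h
        = ∑ h ∈ range (m + 1), Q ^ (h + 1).choose 2 * (Q ^ (h + 1) * gbinom Q m (h + 1)) *
            x ^ (m - h) * y ^ (h + 1) + x ^ (m + 1) := by
      conv_rhs => rw [sum_range_succ, gbinom_of_lt (Nat.lt_succ_self m)]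
      rw [mul_sum, sum_range_succ', gbinom_zero_right hQ]
      simp only [mul_zero, zero_mul, add_zero, Nat.choose_zero_succ, pow_zero, Nat.sub_zero,
        mul_one, one_mul, ← pow_succ']
      congr 1
      refine sum_congr rfl fun h hh => ?_
      rw [show m - h = m - (h + 1) + 1 by grind]
      ring
    have hy : y * ∑ h ∈ range (m + 1), Q ^ h.choose 2 * gbinom Q m h * x ^ (m - h) * (y * Q) ^ h
        = ∑ h ∈ range (m + 1), Q ^ (h + 1).choose 2 * gbinom Q m h * x ^ (m - h) * y ^ (h + 1) := by
      rw [mul_sum]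
      refine sum_congr rfl fun h _ => ?_
      rw [Nat.choose_succ_succ', Nat.choose_one_right]
      ring
    have hshift : ∏ i ∈ range m, (x + y * Q ^ (i + 1)) = ∏ i ∈ range m, (x + y * Q * Q ^ i) :=
      prod_congr rfl fun i _ => by ring
    rw [prod_range_succ', hshift, ih, pow_zero, mul_one, mul_add, mul_comm _ x, mul_comm _ y, hx,
      hy, sum_range_succ' _ (m + 1), gbinom_zero_right hQ, add_right_comm, ← sum_add_distrib]
    simp only [gbinom_succ_succ hQ, Nat.choose_zero_succ, pow_zero, Nat.sub_zero, mul_one, one_mul,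
      Nat.add_sub_add_right]
    congr 1
    exact sum_congr rfl fun h _ => by ring

theorem tendsto_gbinom_atTop (hQ : ‖Q‖ < 1) (s : ℕ) :
    Tendsto (fun m => gbinom Q m s) atTop (𝓝 (qPoch Q Q s)⁻¹) := by
  rw [← tendsto_add_atTop_iff_nat s]
  simp_rw [gbinom_add_eq_qPoch_div hQ, div_eq_mul_inv]
  have hcont : Continuous fun t => qPoch t Q s := by unfold qPoch; fun_prop
  have hpow : Tendsto (fun n => Q ^ (n + 1)) atTop (𝓝 0) :=
    (tendsto_pow_atTop_nhds_zero_of_norm_lt_one hQ).comp (tendsto_add_atTop_nat 1)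
  simpa [qPoch] using ((hcont.tendsto 0).comp hpow).mul_const (qPoch Q Q s)⁻¹

theorem norm_gbinom_le (hQ : ‖Q‖ < 1) (m s : ℕ) : ‖gbinom Q m s‖ ≤ (2 * (1 - ‖Q‖)⁻¹) ^ s := by
  rcases lt_or_ge m s with hms | hsm
  · rw [gbinom_of_lt hms, norm_zero]
    positivity
  obtain ⟨n, rfl⟩ := Nat.exists_eq_add_of_le' hsm
  have hQn : ‖Q ^ (n + 1)‖ ≤ 1 := (norm_pow_lt_one hQ n.succ_ne_zero).le
  rw [gbinom_add_eq_qPoch_div hQ, norm_div, div_eq_mul_inv, ← norm_inv, mul_pow]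
  gcongr
  · exact (norm_qPoch_le hQ.le s).trans (by gcongr; linarith)
  · exact norm_inv_qPoch_le hQ hQ.le s

end GaussianBinomial

section Euler

variable {Q : ℂ}

noncomputable def eulerTerm (Q t : ℂ) (s : ℕ) : ℂ := t ^ s * Q ^ s.choose 2 / qPoch Q Q s

theorem norm_eulerTerm_le (hQ : ‖Q‖ < 1) {t : ℂ} {r : ℝ} (ht : ‖t‖ ≤ r) (s : ℕ) :
    ‖eulerTerm Q t s‖ ≤ (r * (1 - ‖Q‖)⁻¹) ^ s * ‖Q‖ ^ s.choose 2 := by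
  rw [eulerTerm, div_eq_mul_inv, norm_mul, norm_mul, norm_pow, norm_pow, mul_pow]
  have hr : 0 ≤ r := (norm_nonneg t).trans ht
  calc ‖t‖ ^ s * ‖Q‖ ^ s.choose 2 * ‖(qPoch Q Q s)⁻¹‖
      ≤ r ^ s * ‖Q‖ ^ s.choose 2 * (1 - ‖Q‖)⁻¹ ^ s :=
        mul_le_mul (by gcongr) (norm_inv_qPoch_le hQ hQ.le s) (norm_nonneg _)
          (mul_nonneg (pow_nonneg hr s) (by positivity))
    _ = _ := by ring

theorem prod_one_add_mul_pow_eq_tsum (hQ : ‖Q‖ < 1) (t : ℂ) (m : ℕ) :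
    ∏ i ∈ range m, (1 + t * Q ^ i) = ∑' s, Q ^ s.choose 2 * gbinom Q m s * t ^ s := by
  rw [prod_add_mul_pow_eq_sum_gbinom hQ, tsum_eq_sum (s := range (m + 1))]
  · simp
  · intro s hs
    rw [gbinom_of_lt (by simpa using hs), mul_zero, zero_mul]

theorem tendsto_tsum_gbinom_atTop (hQ : ‖Q‖ < 1) (t : ℂ) :
    Tendsto (fun m => ∑' s, Q ^ s.choose 2 * gbinom Q m s * t ^ s) atTop
      (𝓝 (∑' s, eulerTerm Q t s)) := by
  have hQ1 : 0 < 1 - ‖Q‖ := by linarith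
  refine tendsto_tsum_of_dominated_convergence
    (bound := fun s => (‖t‖ * (2 * (1 - ‖Q‖)⁻¹)) ^ s * ‖Q‖ ^ s.choose 2)
    (summable_pow_mul_pow_choose (by positivity) (norm_nonneg Q) hQ) (fun s => ?_)
    (.of_forall fun m s => ?_)
  · convert ((tendsto_gbinom_atTop hQ s).const_mul (Q ^ s.choose 2)).mul_const (t ^ s) using 2
    rw [eulerTerm]; ring
  · rw [norm_mul, norm_mul, norm_pow, norm_pow, mul_pow]
    calc ‖Q‖ ^ s.choose 2 * ‖gbinom Q m s‖ * ‖t‖ ^ s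
        ≤ ‖Q‖ ^ s.choose 2 * (2 * (1 - ‖Q‖)⁻¹) ^ s * ‖t‖ ^ s := by
          gcongr; exact norm_gbinom_le hQ m s
      _ = _ := by ring

theorem qPochInf_neg_eq_tsum_eulerTerm (hQ : ‖Q‖ < 1) (t : ℂ) :
    qPochInf (-t) Q = ∑' s, eulerTerm Q t s := by
  have hgeom : Summable fun i => ‖t * Q ^ i‖ := by
    simpa [norm_mul, norm_pow] using
      (summable_geometric_of_lt_one (norm_nonneg Q) hQ).mul_left ‖t‖
  have hprod : Tendsto (fun m => ∏ i ∈ range m, (1 + t * Q ^ i)) atTop (𝓝 (qPochInf (-t) Q)) := by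
    simpa [qPochInf, sub_eq_add_neg] using
      (multipliable_one_add_of_summable hgeom).hasProd.tendsto_prod_nat
  simp_rw [prod_one_add_mul_pow_eq_tsum hQ] at hprod
  exact tendsto_nhds_unique hprod (tendsto_tsum_gbinom_atTop hQ t)

end Euler

namespace DPartition

section Stack

/-- The least level of a part placed directly above the top entry of `l`. -/
def minLevel : List (Bool × ℕ) → ℕ
  | [] => 0
  | p :: _ => p.2 + 1 + p.1.toNat

@[simp] theorem minLevel_cons (p : Bool × ℕ) (l : List (Bool × ℕ)) :
    minLevel (p :: l) = p.2 + 1 + p.1.toNat := rfl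

def LevelGap (p p' : Bool × ℕ) : Prop := minLevel [p'] ≤ p.2

theorem isChain_levelGap_cons {p : Bool × ℕ} {l : List (Bool × ℕ)} :
    (p :: l).IsChain LevelGap ↔ minLevel l ≤ p.2 ∧ l.IsChain LevelGap := by
  cases l <;> simp [minLevel, LevelGap, List.isChain_cons_cons]

/-- Turns a list of colours and gaps into a list of colours and levels, each level exceeding the
least admissible one by the corresponding gap. -/
def stack : List (Bool × ℕ) → List (Bool × ℕ)
  | [] => []
  | p :: r => (p.1, p.2 + minLevel (stack r)) :: stack r

def unstack : List (Bool × ℕ) → List (Bool × ℕ)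
  | [] => []
  | p :: r => (p.1, p.2 - minLevel r) :: unstack r

theorem isChain_stack (w : List (Bool × ℕ)) : (stack w).IsChain LevelGap := by
  induction w with
  | nil => simp [stack]
  | cons p r ih => exact isChain_levelGap_cons.mpr ⟨Nat.le_add_left _ _, ih⟩

theorem unstack_stack (w : List (Bool × ℕ)) : unstack (stack w) = w := by
  induction w with
  | nil => rfl
  | cons p r ih => simp [stack, unstack, ih]

theorem stack_unstack {l : List (Bool × ℕ)} (hl : l.IsChain LevelGap) : stack (unstack l) = l := by
  induction l with
  | nil => rfl
  | cons p r ih =>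
    obtain ⟨hp, hr⟩ := isChain_levelGap_cons.mp hl
    simp [stack, unstack, ih hr, Nat.sub_add_cancel hp]

def stackEquiv : List (Bool × ℕ) ≃ {l : List (Bool × ℕ) // l.IsChain LevelGap} where
  toFun w := ⟨stack w, isChain_stack w⟩
  invFun l := unstack l
  left_inv := unstack_stack
  right_inv l := Subtype.ext (stack_unstack l.2)

theorem minLevel_stack (w : List (Bool × ℕ)) :
    minLevel (stack w) = (w.map fun p => p.2 + 1 + p.1.toNat).sum := by
  induction w with
  | nil => rfl
  | cons p r ih => simp only [stack, minLevel_cons, List.map_cons, List.sum_cons, ih]; ring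

/-- The factor contributed to the weight of a stack by its `j`-th entry `p` of colour and gap,
counted from the top. -/
def levelWeight {M : Type*} [Monoid M] (w : Bool → M) (Q : M) (j : ℕ) (p : Bool × ℕ) : M :=
  w p.1 * Q ^ (j * (1 + p.1.toNat)) * (Q ^ (j + 1)) ^ p.2

theorem prod_map_stack_ofFn {M : Type*} [CommMonoid M] (w : Bool → M) (Q : M) {m : ℕ}
    (t : Fin m → Bool × ℕ) :
    ((stack (List.ofFn t)).map fun p => w p.1 * Q ^ p.2).prod =
      ∏ j : Fin m, levelWeight w Q j (t j) := by
  simp only [levelWeight]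
  induction m with
  | zero => simp [stack]
  | succ n ih =>
    rw [List.ofFn_succ, stack, List.map_cons, List.prod_cons, ih, minLevel_stack,
      Fin.prod_univ_succ]
    simp only [List.sum_ofFn, List.map_ofFn, Function.comp_def, Fin.val_zero, Fin.val_succ]
    have hshift (j : ℕ) (p : Bool × ℕ) :
        w p.1 * Q ^ ((j + 1) * (1 + p.1.toNat)) * (Q ^ (j + 1 + 1)) ^ p.2 =
          w p.1 * Q ^ (j * (1 + p.1.toNat)) * (Q ^ (j + 1)) ^ p.2 * Q ^ (p.2 + 1 + p.1.toNat) := by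
      simp only [← pow_mul, mul_assoc, ← pow_add]
      congr 2
      ring
    conv_rhs => rw [prod_congr rfl fun (j : Fin n) _ => hshift j (t j.succ), prod_mul_distrib,
      prod_pow_eq_pow_sum]
    simp only [zero_mul, pow_zero, mul_one, zero_add, pow_one, pow_add]
    ac_rfl

variable {𝕜 : Type*} [NormedField 𝕜] {Q : 𝕜}

theorem summable_norm_levelWeight (hQ : ‖Q‖ < 1) (w : Bool → 𝕜) (j : ℕ) :
    Summable fun p => ‖levelWeight w Q j p‖ :=
  summable_norm_mul_pow (fun ε => w ε * Q ^ (j * (1 + ε.toNat)))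
    (norm_pow_lt_one hQ j.succ_ne_zero)

theorem tsum_levelWeight [CompleteSpace 𝕜] (hQ : ‖Q‖ < 1) (w : Bool → 𝕜) (j : ℕ) :
    ∑' p, levelWeight w Q j p =
      (w false * Q ^ j + w true * Q ^ (j * 2)) * (1 - Q ^ (j + 1))⁻¹ := by
  refine (tsum_mul_pow (fun ε => w ε * Q ^ (j * (1 + ε.toNat)))
    (norm_pow_lt_one hQ j.succ_ne_zero)).trans ?_
  rw [Fintype.sum_bool, add_comm]
  simp

theorem tsum_norm_levelWeight_le (hQ : ‖Q‖ < 1) (w : Bool → 𝕜) (j : ℕ) :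
    ∑' p, ‖levelWeight w Q j p‖ ≤ (‖w false‖ + ‖w true‖) * (1 - ‖Q‖)⁻¹ * ‖Q‖ ^ j := by
  have hpow (e : ℕ) : ‖Q‖ ^ (j * (1 + e)) ≤ ‖Q‖ ^ j :=
    pow_le_pow_of_le_one (norm_nonneg Q) hQ.le (Nat.le_mul_of_pos_right j (by omega))
  have hQj : ‖Q‖ ^ (j + 1) ≤ ‖Q‖ := pow_le_of_le_one (norm_nonneg Q) hQ.le (by omega)
  have hgeom : (1 - ‖Q‖ ^ (j + 1))⁻¹ ≤ (1 - ‖Q‖)⁻¹ := inv_anti₀ (by linarith) (by linarith)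
  simp only [levelWeight, norm_mul (w _ * _), norm_pow (Q ^ (_ + 1))]
  rw [tsum_mul_pow (fun ε => ‖w ε * Q ^ (j * (1 + ε.toNat))‖)
      (by rw [norm_norm]; exact norm_pow_lt_one hQ j.succ_ne_zero), Fintype.sum_bool]
  simp only [norm_mul, norm_pow, Bool.toNat_true, Bool.toNat_false]
  calc (‖w true‖ * ‖Q‖ ^ (j * (1 + 1)) + ‖w false‖ * ‖Q‖ ^ (j * (1 + 0))) *
        (1 - ‖Q‖ ^ (j + 1))⁻¹
      ≤ (‖w true‖ * ‖Q‖ ^ j + ‖w false‖ * ‖Q‖ ^ j) * (1 - ‖Q‖)⁻¹ :=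
        mul_le_mul (add_le_add (mul_le_mul_of_nonneg_left (hpow 1) (norm_nonneg _))
          (mul_le_mul_of_nonneg_left (hpow 0) (norm_nonneg _))) hgeom
          (inv_nonneg.mpr (by linarith)) (by positivity)
    _ = _ := by ring

theorem tsum_prod_map_stack [CompleteSpace 𝕜] (hQ : ‖Q‖ < 1) (w : Bool → 𝕜) :
    ∑' l : List (Bool × ℕ), ((stack l).map fun p => w p.1 * Q ^ p.2).prod =
      ∑' m, ∏ j ∈ range m, (w false * Q ^ j + w true * Q ^ (j * 2)) * (1 - Q ^ (j + 1))⁻¹ := by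
  rw [← List.equivSigmaTuple.symm.tsum_eq]
  refine (tsum_congr fun (p : Σ m, (Fin m → Bool × ℕ)) => prod_map_stack_ofFn w Q p.2).trans ?_
  have hQ1 : 0 < 1 - ‖Q‖ := by linarith
  rw [tsum_sigma_fin_prod (summable_norm_levelWeight hQ w)
    (summable_prod_range_of_le (fun j => tsum_nonneg fun _ => norm_nonneg _)
      (tsum_norm_levelWeight_le hQ w) (by positivity) (norm_nonneg Q) hQ)]
  exact tsum_congr fun m => prod_congr rfl fun j _ => tsum_levelWeight hQ w j

end Stack

section Parts

variable {a b k : ℕ}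

/-- The part of colour `p.1` at level `p.2`: colour `false` has residue `a` and colour `true`
residue `b` modulo `k`. -/
def part (a b k : ℕ) (p : Bool × ℕ) : ℕ := a + (b - a) * p.1.toNat + k * p.2

def unpart (a b k x : ℕ) : Bool × ℕ :=
  if x % k = a % k then (false, x / k) else (true, (x - b) / k)

theorem part_mod (hab : a ≤ b) (p : Bool × ℕ) :
    part a b k p % k = if p.1 then b % k else a % k := by
  rcases p with ⟨_ | _, c⟩ <;> simp [part, Nat.add_sub_cancel' hab]

theorem mod_ne_mod (ha : 1 ≤ a) (hab : a < b) (hbk : b ≤ k) : a % k ≠ b % k := by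
  rw [Nat.mod_eq_of_lt (hab.trans_le hbk)]
  rcases hbk.lt_or_eq with hbk | rfl
  · rw [Nat.mod_eq_of_lt hbk]; omega
  · rw [Nat.mod_self]; omega

theorem unpart_part (ha : 1 ≤ a) (hab : a < b) (hbk : b ≤ k) (p : Bool × ℕ) :
    unpart a b k (part a b k p) = p := by
  have hk : 0 < k := by omega
  rcases p with ⟨_ | _, c⟩
  · simp [unpart, part, Nat.add_mul_div_left _ _ hk, Nat.div_eq_of_lt (hab.trans_le hbk)]
  · simp only [unpart, part_mod hab.le, if_true, if_neg (mod_ne_mod ha hab hbk).symm]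
    simp [part, Nat.add_sub_cancel' hab.le, hk]

theorem part_unpart (hab : a < b) (hbk : b ≤ k) {x : ℕ}
    (hx : 0 < x ∧ (x % k = a % k ∨ x % k = b % k)) : part a b k (unpart a b k x) = x := by
  by_cases hxa : x % k = a % k
  · simp only [unpart, hxa, if_true, part, Bool.toNat_false, mul_zero, add_zero]
    rw [← Nat.mod_eq_of_lt (hab.trans_le hbk), ← hxa, Nat.mod_add_div]
  have hxb := hx.2.resolve_left hxa
  have hbx : b ≤ x := by
    rcases hbk.lt_or_eq with hbk | rfl
    · rw [Nat.mod_eq_of_lt hbk] at hxb; exact hxb ▸ Nat.mod_le x k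
    · exact Nat.le_of_dvd hx.1 (Nat.dvd_of_mod_eq_zero (by simpa using hxb))
  simp only [unpart, hxa, if_false, part, Bool.toNat_true, mul_one]
  rw [Nat.mul_div_cancel' (Nat.dvd_of_mod_eq_zero (Nat.sub_mod_eq_zero_of_mod_eq hxb))]
  omega

theorem gap_iff (ha : 1 ≤ a) (hab : a < b) (hbk : b ≤ k) (p p' : Bool × ℕ) :
    (part a b k p' + k ≤ part a b k p ∧
        (part a b k p % k = b % k → part a b k p' + k < part a b k p)) ↔ LevelGap p p' := by
  have hne := mod_ne_mod ha hab hbk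
  rw [part_mod hab.le]
  obtain ⟨e, rfl⟩ := Nat.exists_eq_add_of_le hab.le
  -- in each of the four colour cases, `0 < e < k` turns the condition into one on the levels
  rcases p with ⟨_ | _, c⟩ <;> rcases p' with ⟨_ | _, c'⟩ <;>
    simp [part, LevelGap, hne] <;> constructor <;> intro h <;> (try constructor) <;> nlinarith

theorem memD_map_part_iff (ha : 1 ≤ a) (hab : a < b) (hbk : b ≤ k) (l : List (Bool × ℕ)) :
    memD a b k (l.map (part a b k)) ↔ l.IsChain LevelGap := by
  have hchain : (l.map (part a b k)).IsChain (fun x y => y + k ≤ x ∧ (x % k = b % k → y + k < x))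
      ↔ l.IsChain LevelGap := by
    simp only [List.isChain_map, gap_iff ha hab hbk]
  refine ⟨fun h => hchain.mp h.2.2, fun h => ⟨?_, ?_, hchain.mpr h⟩⟩
  · exact List.isChain_iff_pairwise.mp ((hchain.mpr h).imp fun x y hxy => by omega)
  · simp only [List.mem_map, forall_exists_index, and_imp, forall_apply_eq_imp_iff₂]
    intro p _
    refine ⟨by unfold part; omega, ?_⟩
    rw [part_mod hab.le]
    split <;> simp

theorem map_part_map_unpart (hab : a < b) (hbk : b ≤ k) {L : List ℕ} (hL : memD a b k L) :
    (L.map (unpart a b k)).map (part a b k) = L := by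
  rw [List.map_map]
  exact (List.map_congr_left fun x hx => part_unpart hab hbk (hL.2.1 x hx)).trans L.map_id

def partEquiv (ha : 1 ≤ a) (hab : a < b) (hbk : b ≤ k) :
    {l : List (Bool × ℕ) // l.IsChain LevelGap} ≃ {L : List ℕ // memD a b k L} where
  toFun l := ⟨l.1.map (part a b k), (memD_map_part_iff ha hab hbk _).mpr l.2⟩
  invFun L := ⟨L.1.map (unpart a b k), by
    rw [← memD_map_part_iff ha hab hbk, map_part_map_unpart hab hbk L.2]; exact L.2⟩
  left_inv l := Subtype.ext <| by
    simp [List.map_map, Function.comp_def, unpart_part ha hab hbk]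
  right_inv L := Subtype.ext (map_part_map_unpart hab hbk L.2)

theorem lcount_cons (k c x : ℕ) (l : List ℕ) :
    lcount k c (x :: l) = lcount k c l + if x % k = c % k then 1 else 0 := by
  by_cases h : x % k = c % k <;> simp [lcount, h]

theorem pow_lcount_mul_pow_sum_map_part (ha : 1 ≤ a) (hab : a < b) (hbk : b ≤ k) (u v q : ℂ)
    (l : List (Bool × ℕ)) :
    u ^ lcount k a (l.map (part a b k)) * v ^ lcount k b (l.map (part a b k)) *
        q ^ (l.map (part a b k)).sum =
      (l.map fun p => (if p.1 then v * q ^ b else u * q ^ a) * (q ^ k) ^ p.2).prod := by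
  have hne := mod_ne_mod ha hab hbk
  induction l with
  | nil => simp [lcount]
  | cons p r ih =>
    rw [List.map_cons, List.map_cons, List.prod_cons, ← ih, lcount_cons, lcount_cons,
      List.sum_cons, part_mod hab.le]
    rcases p with ⟨_ | _, c⟩
    · simp [hne, part, pow_add, pow_mul]; ring
    · simp [hne.symm, part, pow_add, pow_mul, Nat.add_sub_cancel' hab.le]; ring

end Parts

section GeneratingFunction

variable {a b k : ℕ}

theorem tsum_memD_eq_tsum_prod (ha : 1 ≤ a) (hab : a < b) (hbk : b ≤ k) {q : ℂ}
    (hq : ‖q‖ < 1) (u v : ℂ) :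
    ∑' π : {l : List ℕ // memD a b k l}, u ^ lcount k a π.1 * v ^ lcount k b π.1 * q ^ π.1.sum =
      ∑' m, ∏ j ∈ range m,
        (u * q ^ a * (q ^ k) ^ j + v * q ^ b * (q ^ k) ^ (j * 2)) * (1 - (q ^ k) ^ (j + 1))⁻¹ := by
  rw [← (stackEquiv.trans (partEquiv ha hab hbk)).tsum_eq]
  refine (tsum_congr fun l => pow_lcount_mul_pow_sum_map_part ha hab hbk u v q (stack l)).trans ?_
  simpa using tsum_prod_map_stack (norm_pow_lt_one hq (by omega : k ≠ 0))
    fun ε => if ε then v * q ^ b else u * q ^ a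

theorem prod_range_eq_div_qPoch (hab : a ≤ b) (q u v : ℂ) (m : ℕ) :
    ∏ j ∈ range m,
        (u * q ^ a * (q ^ k) ^ j + v * q ^ b * (q ^ k) ^ (j * 2)) * (1 - (q ^ k) ^ (j + 1))⁻¹ =
      q ^ (k * m.choose 2 + m * a) * (∏ j ∈ range m, (u + v * q ^ (b - a + k * j))) /
        qPoch (q ^ k) (q ^ k) m := by
  obtain ⟨e, rfl⟩ := Nat.exists_eq_add_of_le hab
  have hfac (j : ℕ) : u * q ^ a * (q ^ k) ^ j + v * q ^ (a + e) * (q ^ k) ^ (j * 2) =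
      (q ^ a * (q ^ k) ^ j) * (u + v * q ^ (a + e - a + k * j)) := by
    rw [Nat.add_sub_cancel_left]; ring
  simp only [hfac, prod_mul_distrib, prod_inv_distrib, qPoch, ← pow_succ', prod_const, card_range]
  rw [prod_pow_eq_pow_sum (range m) (fun j => j), sum_range_id, ← Nat.choose_two_right]
  ring

theorem div_qPoch_eq_sum_antidiagonal (hab : a ≤ b) {q : ℂ} (hQ : ‖q ^ k‖ < 1) (u v : ℂ)
    (m : ℕ) :
    q ^ (k * m.choose 2 + m * a) * (∏ j ∈ range m, (u + v * q ^ (b - a + k * j))) /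
        qPoch (q ^ k) (q ^ k) m =
      ∑ p ∈ antidiagonal m, v ^ p.1 * q ^ (2 * k * p.1.choose 2 + b * p.1) /
        qPoch (q ^ k) (q ^ k) p.1 * eulerTerm (q ^ k) (u * q ^ (k * p.1 + a)) p.2 := by
  have hprod : ∏ j ∈ range m, (u + v * q ^ (b - a + k * j)) =
      ∏ j ∈ range m, (u + v * q ^ (b - a) * (q ^ k) ^ j) :=
    prod_congr rfl fun j _ => by rw [pow_add, pow_mul, mul_assoc]
  rw [hprod, prod_add_mul_pow_eq_sum_gbinom hQ,
    ← Nat.sum_antidiagonal_eq_sum_range_succ fun h s =>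
      (q ^ k) ^ h.choose 2 * gbinom (q ^ k) m h * u ^ s * (v * q ^ (b - a)) ^ h,
    mul_sum, sum_div]
  refine sum_congr rfl fun p hp => ?_
  rw [HasAntidiagonal.mem_antidiagonal] at hp
  subst hp
  obtain ⟨e, rfl⟩ := Nat.exists_eq_add_of_le hab
  have := qPoch_ne_zero hQ hQ.le p.1
  have := qPoch_ne_zero hQ hQ.le p.2
  have := qPoch_ne_zero hQ hQ.le (p.1 + p.2)
  rw [gbinom_add, eulerTerm, add_choose_two, Nat.add_sub_cancel_left]
  field_simp
  ring

theorem summable_mul_eulerTerm {q : ℂ} (hq : ‖q‖ < 1) (hQ : ‖q ^ k‖ < 1) (u v : ℂ) :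
    Summable fun p : ℕ × ℕ => v ^ p.1 * q ^ (2 * k * p.1.choose 2 + b * p.1) /
      qPoch (q ^ k) (q ^ k) p.1 * eulerTerm (q ^ k) (u * q ^ (k * p.1 + a)) p.2 := by
  have hq1 (n : ℕ) : ‖q‖ ^ n ≤ 1 := pow_le_one₀ (norm_nonneg q) hq.le
  have hQ1 : 0 ≤ (1 - ‖q ^ k‖)⁻¹ := inv_nonneg.mpr (by linarith)
  have hfirst (h : ℕ) : v ^ h * q ^ (2 * k * h.choose 2 + b * h) / qPoch (q ^ k) (q ^ k) h =
      (q ^ k) ^ h.choose 2 * eulerTerm (q ^ k) (v * q ^ b) h := by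
    rw [eulerTerm]; ring
  refine .of_norm_bounded (g := fun p : ℕ × ℕ =>
      ((‖v‖ * (1 - ‖q ^ k‖)⁻¹) ^ p.1 * ‖q ^ k‖ ^ p.1.choose 2) *
        ((‖u‖ * (1 - ‖q ^ k‖)⁻¹) ^ p.2 * ‖q ^ k‖ ^ p.2.choose 2))
    ((summable_pow_mul_pow_choose (by positivity) (norm_nonneg _) hQ).mul_of_nonneg
      (summable_pow_mul_pow_choose (by positivity) (norm_nonneg _) hQ)
      (fun _ => by positivity) (fun _ => by positivity)) fun p => ?_
  rw [hfirst, norm_mul, norm_mul, ← one_mul (_ ^ p.1 * _)]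
  refine mul_le_mul (mul_le_mul ?_ (norm_eulerTerm_le hQ ?_ p.1) (norm_nonneg _) zero_le_one)
    (norm_eulerTerm_le hQ ?_ p.2) (norm_nonneg _) (by positivity)
  · rw [norm_pow]; exact pow_le_one₀ (norm_nonneg _) hQ.le
  · rw [norm_mul, norm_pow]; exact mul_le_of_le_one_right (norm_nonneg v) (hq1 b)
  · rw [norm_mul, norm_pow]; exact mul_le_of_le_one_right (norm_nonneg u) (hq1 _)

theorem tsum_div_qPoch_eq_tsum_mul_qPochInf (hab : a ≤ b) {q : ℂ} (hq : ‖q‖ < 1)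
    (hQ : ‖q ^ k‖ < 1) (u v : ℂ) :
    ∑' m, q ^ (k * m.choose 2 + m * a) * (∏ j ∈ range m, (u + v * q ^ (b - a + k * j))) /
        qPoch (q ^ k) (q ^ k) m =
      ∑' h, v ^ h * q ^ (2 * k * h.choose 2 + b * h) / qPoch (q ^ k) (q ^ k) h *
        qPochInf (-(u * q ^ (k * h + a))) (q ^ k) := by
  have hT := summable_mul_eulerTerm (a := a) (b := b) hq hQ u v
  simp_rw [div_qPoch_eq_sum_antidiagonal hab hQ u v]
  rw [← tsum_prod_eq_tsum_sum_antidiagonal hT, hT.tsum_prod' hT.prod_factor]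
  exact tsum_congr fun h => by dsimp only; rw [tsum_mul_left, qPochInf_neg_eq_tsum_eulerTerm hQ]

end GeneratingFunction

end DPartition

/-- Generating function for `D_{a,b,k}`:
`Σ_{π ∈ D_{a,b,k}} u^{ℓ_a(π)} v^{ℓ_b(π)} q^{|π|}
  = Σ_{m≥0} u^m q^{k C(m,2)+ma} (-u⁻¹ v q^{b-a}; q^k)_m / (q^k;q^k)_m
  = Σ_{h≥0} v^h q^{2k C(h,2)+bh} / (q^k;q^k)_h · (-u q^{kh+a}; q^k)_∞`,
where `u^m (-u⁻¹ v q^{b-a}; q^k)_m = ∏_{j=0}^{m-1} (u + v q^{b-a+kj})`. -/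
theorem gen_D_abk (a b k : ℕ) (ha : 1 ≤ a) (hab : a < b) (hbk : b ≤ k)
    (q u v : ℂ) (hq : ‖q‖ < 1) :
    (∑' π : {l : List ℕ // memD a b k l},
        u ^ lcount k a π.1 * v ^ lcount k b π.1 * q ^ π.1.sum
      = ∑' m : ℕ, q ^ (k * Nat.choose m 2 + m * a) *
          (∏ j ∈ Finset.range m, (u + v * q ^ (b - a + k * j))) / qPoch (q ^ k) (q ^ k) m)
    ∧ (∑' π : {l : List ℕ // memD a b k l},
        u ^ lcount k a π.1 * v ^ lcount k b π.1 * q ^ π.1.sum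
      = ∑' h : ℕ, v ^ h * q ^ (2 * k * Nat.choose h 2 + b * h) / qPoch (q ^ k) (q ^ k) h *
          qPochInf (-(u * q ^ (k * h + a))) (q ^ k)) := by
  have hfirst := (DPartition.tsum_memD_eq_tsum_prod ha hab hbk hq u v).trans
    (tsum_congr fun m => DPartition.prod_range_eq_div_qPoch hab.le q u v m)
  exact ⟨hfirst, hfirst.trans <| DPartition.tsum_div_qPoch_eq_tsum_mul_qPochInf hab.le hq
    (norm_pow_lt_one hq (by omega)) u v⟩
end

section
/- For integers a, b, k with k ≥ b > a ≥ 1 and any ℓ ≥ 0, the map sending (π_1,…,π_ℓ) to (π_1 + k(ℓ−1), π_2 + k(ℓ−2), …, π_{ℓ−1} + k, π_ℓ) is a bijection from R_{a,b,k}(ℓ) to D_{a,b,k}(ℓ) preserving ℓ_a and ℓ_b and increasing the weight by exactly k·C(ℓ,2); consequently Σ_{π ∈ D_{a,b,k}(ℓ)} u^{ℓ_a(π)} v^{ℓ_b(π)} q^{|π|} = q^{k·C(ℓ,2)} Σ_{π ∈ R_{a,b,k}(ℓ)} u^{ℓ_a(π)} v^{ℓ_b(π)} q^{|π|}. -/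
/-- Add `k(ℓ-1), k(ℓ-2), …, k, 0` to the successive parts of a list of length `ℓ`. -/
def stretch (k : ℕ) (l : List ℕ) : List ℕ := l.mapIdx fun i x => x + k * (l.length - 1 - i)

/-- Membership in `R_{a,b,k}`: parts `≡ a` or `b (mod k)`, only parts `≡ a (mod k)` repeated. -/
def memR (a b k : ℕ) (l : List ℕ) : Prop :=
  l.Pairwise (· ≥ ·) ∧ (∀ x ∈ l, 0 < x ∧ (x % k = a % k ∨ x % k = b % k)) ∧
    (∀ x : ℕ, x % k = b % k → l.count x ≤ 1)

section Stretch

variable (k : ℕ)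

lemma stretch_cons (x : ℕ) (l : List ℕ) :
    stretch k (x :: l) = (x + k * l.length) :: stretch k l := by
  simp only [stretch, List.mapIdx_cons, List.length_cons, Nat.add_sub_cancel, Nat.sub_sub,
    Nat.add_comm 1, Nat.sub_zero]

@[simp]
lemma length_stretch (l : List ℕ) : (stretch k l).length = l.length := by
  simp [stretch]

lemma sum_stretch (l : List ℕ) : (stretch k l).sum = l.sum + k * l.length.choose 2 := by
  induction l with
  | nil => rfl
  | cons x t ih =>
    rw [stretch_cons, List.sum_cons, ih, List.length_cons, Nat.choose_succ_succ,
      Nat.choose_one_right, List.sum_cons]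
    ring

lemma lcount_stretch (c : ℕ) (l : List ℕ) : lcount k c (stretch k l) = lcount k c l := by
  induction l with
  | nil => rfl
  | cons x t ih =>
    simp only [lcount, stretch_cons, List.filter_cons, Nat.add_mul_mod_self_left] at ih ⊢
    split <;> simp [ih]

lemma stretch_injective : Function.Injective (stretch k) := by
  intro l₁ l₂ h
  induction l₁ generalizing l₂ with
  | nil => cases l₂ <;> simp_all [stretch]
  | cons x t ih =>
    cases l₂ with
    | nil => simp [stretch] at h
    | cons y s =>
      rw [stretch_cons, stretch_cons, List.cons_eq_cons] at h
      obtain rfl := ih h.2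
      rw [Nat.add_right_cancel h.1]

lemma forall_mem_stretch_iff {P : ℕ → Prop} (hP : ∀ x j, P (x + k * j) ↔ P x) (l : List ℕ) :
    (∀ x ∈ stretch k l, P x) ↔ ∀ x ∈ l, P x := by
  induction l with
  | nil => simp [stretch]
  | cons x t ih => simp only [stretch_cons, List.forall_mem_cons, hP, ih]

lemma forall_pos_stretch_iff {l : List ℕ} (hl : l.Pairwise (· ≥ ·)) :
    (∀ x ∈ stretch k l, 0 < x) ↔ ∀ x ∈ l, 0 < x := by
  induction l with
  | nil => simp [stretch]
  | cons x t ih =>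
    rw [List.pairwise_cons] at hl
    simp only [stretch_cons, List.forall_mem_cons, ih hl.2]
    refine ⟨fun ⟨hx, ht⟩ => ⟨?_, ht⟩, fun ⟨hx, ht⟩ => ⟨by omega, ht⟩⟩
    cases t with
    | nil => simpa using hx
    | cons y s => exact lt_of_lt_of_le (ht y (by simp)) (hl.1 y (by simp))

lemma mul_length_le_of_isChain {x : ℕ} {l : List ℕ} (h : (x :: l).IsChain (fun x y => y + k ≤ x)) :
    k * l.length ≤ x := by
  induction l generalizing x with
  | nil => simp
  | cons y t ih =>
    rw [List.isChain_cons_cons] at h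
    have := ih h.2
    rw [List.length_cons, Nat.mul_succ]
    omega

lemma exists_stretch_eq_of_isChain {m : List ℕ} (h : m.IsChain (fun x y => y + k ≤ x)) :
    ∃ l, stretch k l = m := by
  induction m with
  | nil => exact ⟨[], rfl⟩
  | cons x t ih =>
    obtain ⟨l, rfl⟩ := ih h.tail
    have := mul_length_le_of_isChain k h
    rw [length_stretch] at this
    exact ⟨(x - k * l.length) :: l, by rw [stretch_cons, Nat.sub_add_cancel this]⟩

end Stretch

section Steps

variable (k b : ℕ)

def RStep (x y : ℕ) : Prop := y ≤ x ∧ (x % k = b % k → y < x)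

def DStep (x y : ℕ) : Prop := y + k ≤ x ∧ (x % k = b % k → y + k < x)

instance : Trans (RStep k b) (RStep k b) (RStep k b) where
  trans hxy hyz := ⟨hyz.1.trans hxy.1, fun hx => hyz.1.trans_lt (hxy.2 hx)⟩

lemma dStep_add_mul_iff (x y n : ℕ) : DStep k b (x + k * (n + 1)) (y + k * n) ↔ RStep k b x y := by
  rw [DStep, RStep, Nat.add_mul_mod_self_left, Nat.mul_succ]
  constructor <;> rintro ⟨h₁, h₂⟩ <;> exact ⟨by omega, fun h => by have := h₂ h; omega⟩

lemma isChain_dStep_stretch_iff (l : List ℕ) :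
    (stretch k l).IsChain (DStep k b) ↔ l.IsChain (RStep k b) := by
  induction l with
  | nil => simp [stretch]
  | cons x t ih =>
    cases t with
    | nil => simp [stretch]
    | cons y s =>
      rw [stretch_cons, List.isChain_cons, ih, List.isChain_cons_cons, stretch_cons]
      simp [dStep_add_mul_iff]

lemma pairwise_rStep_iff (l : List ℕ) :
    l.Pairwise (RStep k b) ↔ l.Pairwise (· ≥ ·) ∧ ∀ x, x % k = b % k → l.count x ≤ 1 := by
  have hcount : ∀ x, l.count x ≤ 1 ↔ ¬ List.Sublist [x, x] l := fun x => by
    rw [← List.duplicate_iff_sublist, List.duplicate_iff_two_le_count]; omega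
  simp only [List.pairwise_iff_forall_sublist, hcount, RStep]
  constructor
  · intro h
    exact ⟨fun hs => (h hs).1, fun x hx hs => lt_irrefl x ((h hs).2 hx)⟩
  · rintro ⟨hle, hnd⟩ x y hs
    refine ⟨hle hs, fun hx => lt_of_le_of_ne (hle hs) ?_⟩
    rintro rfl
    exact hnd y hx hs

end Steps

section Partitions

variable {a b k : ℕ}

lemma memR_iff {l : List ℕ} : memR a b k l ↔
    l.IsChain (RStep k b) ∧ ∀ x ∈ l, 0 < x ∧ (x % k = a % k ∨ x % k = b % k) := by
  rw [memR, List.isChain_iff_pairwise, pairwise_rStep_iff]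
  tauto

lemma memD_iff {l : List ℕ} : memD a b k l ↔
    l.IsChain (DStep k b) ∧ ∀ x ∈ l, 0 < x ∧ (x % k = a % k ∨ x % k = b % k) := by
  refine ⟨fun h => ⟨h.2.2, h.2.1⟩, fun h => ⟨?_, h.2, h.1⟩⟩
  exact (h.1.imp fun x y hxy => show x ≥ y by unfold DStep at hxy; omega).pairwise

lemma memD_stretch_iff {l : List ℕ} : memD a b k (stretch k l) ↔ memR a b k l := by
  rw [memD_iff, memR_iff, isChain_dStep_stretch_iff]
  refine and_congr_right fun hl => ?_
  have hsorted := ((pairwise_rStep_iff k b l).mp hl.pairwise).1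
  rw [forall₂_and, forall₂_and, forall_pos_stretch_iff k hsorted,
    forall_mem_stretch_iff k fun x j => by rw [Nat.add_mul_mod_self_left]]

end Partitions

theorem bijOn_stretch (a b k ℓ : ℕ) :
    Set.BijOn (stretch k) {l : List ℕ | memR a b k l ∧ l.length = ℓ}
      {l : List ℕ | memD a b k l ∧ l.length = ℓ} := by
  refine ⟨fun l hl => ⟨memD_stretch_iff.mpr hl.1, by rw [length_stretch, hl.2]⟩,
    (stretch_injective k).injOn, fun m hm => ?_⟩
  obtain ⟨l, rfl⟩ := exists_stretch_eq_of_isChain k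
    ((memD_iff.mp hm.1).1.imp fun x y hxy => hxy.1)
  exact ⟨l, ⟨memD_stretch_iff.mp hm.1, by rw [← length_stretch k, hm.2]⟩, rfl⟩

noncomputable def stretchEquiv (a b k ℓ : ℕ) :
    {l : List ℕ // memR a b k l ∧ l.length = ℓ} ≃ {l : List ℕ // memD a b k l ∧ l.length = ℓ} :=
  (bijOn_stretch a b k ℓ).equiv (stretch k)

lemma coe_stretchEquiv (a b k ℓ : ℕ) (π : {l : List ℕ // memR a b k l ∧ l.length = ℓ}) :
    (stretchEquiv a b k ℓ π : List ℕ) = stretch k π :=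
  rfl

theorem shift_R_to_D_general (a b k ℓ : ℕ) :
    Set.BijOn (stretch k) {l : List ℕ | memR a b k l ∧ l.length = ℓ}
      {l : List ℕ | memD a b k l ∧ l.length = ℓ}
    ∧ (∀ l : List ℕ, memR a b k l → l.length = ℓ →
        lcount k a (stretch k l) = lcount k a l ∧
        lcount k b (stretch k l) = lcount k b l ∧
        (stretch k l).sum = l.sum + k * Nat.choose ℓ 2)
    ∧ (∀ q u v : ℂ, ‖q‖ < 1 →
        ∑' π : {l : List ℕ // memD a b k l ∧ l.length = ℓ},
            u ^ lcount k a π.1 * v ^ lcount k b π.1 * q ^ π.1.sum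
          = q ^ (k * Nat.choose ℓ 2) *
            ∑' π : {l : List ℕ // memR a b k l ∧ l.length = ℓ},
              u ^ lcount k a π.1 * v ^ lcount k b π.1 * q ^ π.1.sum) := by
  have hweight : ∀ l : List ℕ, l.length = ℓ → (stretch k l).sum = l.sum + k * ℓ.choose 2 :=
    fun l hl => by rw [sum_stretch, hl]
  refine ⟨bijOn_stretch a b k ℓ, fun l _ hl => ⟨lcount_stretch k a l, lcount_stretch k b l, hweight l hl⟩,
    fun q u v _ => ?_⟩
  rw [← tsum_mul_left, ← (stretchEquiv a b k ℓ).tsum_eq]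
  refine tsum_congr fun π => ?_
  rw [coe_stretchEquiv, lcount_stretch, lcount_stretch, hweight π.1 π.2.2, pow_add]
  ring

/-- Adding `k(ℓ-1), k(ℓ-2), …, k, 0` to the parts is a bijection from `R_{a,b,k}(ℓ)` onto
`D_{a,b,k}(ℓ)` preserving `ℓ_a` and `ℓ_b` and increasing the weight by `k·C(ℓ,2)`;
consequently `Σ_{π ∈ D_{a,b,k}(ℓ)} u^{ℓ_a} v^{ℓ_b} q^{|π|}
  = q^{k C(ℓ,2)} Σ_{π ∈ R_{a,b,k}(ℓ)} u^{ℓ_a} v^{ℓ_b} q^{|π|}`. -/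
theorem shift_R_to_D (a b k ℓ : ℕ) (ha : 1 ≤ a) (hab : a < b) (hbk : b ≤ k) :
    Set.BijOn (stretch k) {l : List ℕ | memR a b k l ∧ l.length = ℓ}
      {l : List ℕ | memD a b k l ∧ l.length = ℓ}
    ∧ (∀ l : List ℕ, memR a b k l → l.length = ℓ →
        lcount k a (stretch k l) = lcount k a l ∧
        lcount k b (stretch k l) = lcount k b l ∧
        (stretch k l).sum = l.sum + k * Nat.choose ℓ 2)
    ∧ (∀ q u v : ℂ, ‖q‖ < 1 →
        ∑' π : {l : List ℕ // memD a b k l ∧ l.length = ℓ},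
            u ^ lcount k a π.1 * v ^ lcount k b π.1 * q ^ π.1.sum
          = q ^ (k * Nat.choose ℓ 2) *
            ∑' π : {l : List ℕ // memR a b k l ∧ l.length = ℓ},
              u ^ lcount k a π.1 * v ^ lcount k b π.1 * q ^ π.1.sum) :=
  shift_R_to_D_general a b k ℓ
end
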